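/- arXiv:1210.6401 — 3 statements merged into one kernel-verified Lean document; each statement's English description precedes it below -/
import Mathlib

section
/- Let p, q be positive integers, ω_p, ω_q primitive p-th and q-th roots of unity in ℂ, α : (ZMod p) × (ZMod q) → ℂ, and B = Σ_{(i,j)} α(i,j) (J_p^i ⊗ J_q^j). Then for every t ∈ ℝ, the matrix exponential of tB has entries (exp(tB))_{(i,j),(m,n)} = (1/(pq)) Φ_{m-i,n-j}(t), where Φ_{a,b}(t) = Σ_{(k,l)} ω_p^{ak} ω_q^{bl} exp(t λ_{kl}) and λ_{kl} = Σ_{(i,j)} α(i,j) ω̄_p^{ik} ω̄_q^{jl}. -/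
/-!
`B` is the circulant matrix `(x, y) ↦ α (y - x)` of the group `ZMod p × ZMod q`. The characters
`x ↦ ω̄_p ^ (k.1 x.1) ω̄_q ^ (k.2 x.2)` are orthogonal, so the character table is invertible with
inverse its conjugate transpose over `pq`, and it diagonalises every circulant matrix, with
eigenvalues `λ_k`. Hence `exp (tB)` is conjugate to `diag (exp (t λ_k))`, which gives the formula.
-/

open Matrix Kronecker

noncomputable section

/-- The primary permutation (left-shift) matrix `J_p`. -/
def Jmat (p : ℕ) : Matrix (ZMod p) (ZMod p) ℂ :=
  Matrix.of fun i j => if j = i + 1 then 1 else 0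

section CirculantDiagonalization

variable {G : Type*} [AddCommGroup G] [Fintype G] [DecidableEq G]

def charMatrix (ψ : G → AddChar G ℂ) : Matrix G G ℂ :=
  of fun x k => ψ k x

variable {ψ : G → AddChar G ℂ}

lemma charMatrix_mul_eq_one
    (hψ : ∀ a, ∑ k, ψ k a = if a = 0 then (Fintype.card G : ℂ) else 0) :
    charMatrix ψ * ((Fintype.card G : ℂ)⁻¹ • of fun k y => ψ k (-y)) = 1 := by
  ext x y
  have hcard : (Fintype.card G : ℂ) ≠ 0 := Nat.cast_ne_zero.2 Fintype.card_ne_zero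
  have hsum : ∑ k, ψ k x * ψ k (-y) = if x = y then (Fintype.card G : ℂ) else 0 := by
    simp only [← AddChar.map_add_eq_mul, ← sub_eq_add_neg, hψ, sub_eq_zero]
  rw [Matrix.mul_smul, Matrix.smul_apply, mul_apply]
  simp only [charMatrix, of_apply, hsum, one_apply, smul_eq_mul]
  split_ifs <;> simp [hcard]

lemma inv_charMatrix (hψ : ∀ a, ∑ k, ψ k a = if a = 0 then (Fintype.card G : ℂ) else 0) :
    (charMatrix ψ)⁻¹ = (Fintype.card G : ℂ)⁻¹ • of fun k y => ψ k (-y) :=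
  inv_eq_right_inv (charMatrix_mul_eq_one hψ)

lemma circulant_mul_charMatrix (v : G → ℂ) :
    circulant v * charMatrix ψ = charMatrix ψ * diagonal fun k => ∑ c, v c * ψ k (-c) := by
  ext x k
  rw [mul_diagonal, mul_apply, Finset.mul_sum]
  refine (Fintype.sum_equiv (Equiv.subLeft x) _ _ fun c => ?_).symm
  rw [Equiv.subLeft_apply, circulant_apply, sub_sub_cancel]
  simp only [charMatrix, of_apply, sub_eq_add_neg x c, AddChar.map_add_eq_mul]
  ring

theorem exp_circulant_apply
    (hψ : ∀ a, ∑ k, ψ k a = if a = 0 then (Fintype.card G : ℂ) else 0) (v : G → ℂ) (x y : G) :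
    NormedSpace.exp (circulant v) x y =
      (Fintype.card G : ℂ)⁻¹ * ∑ k, ψ k (x - y) * Complex.exp (∑ c, v c * ψ k (-c)) := by
  have hunit : IsUnit (charMatrix ψ) := (isUnit_iff_isUnit_det _).2
    (isUnit_det_of_right_inverse (charMatrix_mul_eq_one hψ))
  have hdiag : circulant v =
      charMatrix ψ * diagonal (fun k => ∑ c, v c * ψ k (-c)) * (charMatrix ψ)⁻¹ := by
    rw [← circulant_mul_charMatrix, mul_nonsing_inv_cancel_right _ _
      ((isUnit_iff_isUnit_det _).1 hunit)]
  rw [hdiag, Matrix.exp_conj _ _ hunit, Matrix.exp_diagonal, inv_charMatrix hψ, Matrix.mul_smul,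
    Matrix.smul_apply, mul_apply, smul_eq_mul]
  congr 1
  refine Finset.sum_congr rfl fun k _ => ?_
  simp only [mul_diagonal, charMatrix, of_apply, Pi.coe_exp, ← Complex.exp_eq_exp_ℂ,
    sub_eq_add_neg x y, AddChar.map_add_eq_mul]
  ring

end CirculantDiagonalization

section ZModChar

open AddChar

section CommMonoid

variable {M : Type*} [CommMonoid M] {n q : ℕ} {ζ ξ : M}

lemma pow_val_mul_val (hζ : ζ ^ n = 1) (a b : ZMod n) :
    ζ ^ (a.val * b.val) = ζ ^ (a * b).val := by
  rw [ZMod.val_mul, ← pow_eq_pow_mod _ hζ]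

variable [NeZero n] [NeZero q]

def prodZModChar (hζ : ζ ^ n = 1) (hξ : ξ ^ q = 1) (k : ZMod n × ZMod q) :
    AddChar (ZMod n × ZMod q) M :=
  (mulShift (zmodChar n hζ) k.1).compAddMonoidHom (AddMonoidHom.fst _ _) *
    (mulShift (zmodChar q hξ) k.2).compAddMonoidHom (AddMonoidHom.snd _ _)

lemma prodZModChar_apply (hζ : ζ ^ n = 1) (hξ : ξ ^ q = 1) (k x : ZMod n × ZMod q) :
    prodZModChar hζ hξ k x = ζ ^ (k.1 * x.1).val * ξ ^ (k.2 * x.2).val :=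
  rfl

end CommMonoid

section Domain

variable {R : Type*} [CommRing R] [IsDomain R] {n q : ℕ} [NeZero n] [NeZero q] {ζ ξ : R}

lemma sum_pow_val_mul_eq_ite (hζ : IsPrimitiveRoot ζ n) (a : ZMod n) :
    ∑ k : ZMod n, ζ ^ (k * a).val = if a = 0 then (n : R) else 0 := by
  have hshift : mulShift (zmodChar n hζ.pow_eq_one) a = 0 ↔ a = 0 :=
    ⟨not_imp_not.1 (zmodChar_primitive_of_primitive_root n hζ ·),
      by rintro rfl; exact mulShift_zero _⟩
  simp_rw [← zmodChar_apply hζ.pow_eq_one, mul_comm _ a, ← mulShift_apply, sum_eq_ite, ZMod.card,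
    hshift]

lemma sum_prodZModChar_eq_ite (hζ : IsPrimitiveRoot ζ n) (hξ : IsPrimitiveRoot ξ q)
    (a : ZMod n × ZMod q) :
    ∑ k, prodZModChar hζ.pow_eq_one hξ.pow_eq_one k a =
      if a = 0 then (Fintype.card (ZMod n × ZMod q) : R) else 0 := by
  simp only [prodZModChar_apply, Fintype.sum_prod_type, ← Finset.sum_mul_sum,
    sum_pow_val_mul_eq_ite hζ, sum_pow_val_mul_eq_ite hξ, Fintype.card_prod, ZMod.card,
    Prod.ext_iff, Prod.fst_zero, Prod.snd_zero]
  split_ifs <;> simp_all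

end Domain

lemma inv_pow_val {K : Type*} [Field K] {n : ℕ} [NeZero n] {ζ : K} (hζ : ζ ^ n = 1)
    (a : ZMod n) : ζ⁻¹ ^ a.val = ζ ^ (-a).val := by
  rw [inv_pow, ← zmodChar_apply hζ, ← zmodChar_apply hζ, map_neg_eq_inv]

end ZModChar

lemma IsPrimitiveRoot.star_eq_inv {n : ℕ} [NeZero n] {ζ : ℂ} (hζ : IsPrimitiveRoot ζ n) :
    star ζ = ζ⁻¹ :=
  (Complex.inv_eq_conj (hζ.norm'_eq_one (NeZero.ne n))).symm

lemma mul_Jmat_apply {m : Type*} {p : ℕ} [NeZero p] (A : Matrix m (ZMod p) ℂ) (i : m)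
    (j : ZMod p) : (A * Jmat p) i j = A i (j - 1) := by
  simp [mul_apply, Jmat, ← sub_eq_iff_eq_add]

lemma Jmat_pow_apply (p : ℕ) [NeZero p] (k : ℕ) (i j : ZMod p) :
    (Jmat p ^ k) i j = if j = i + k then 1 else 0 := by
  induction k generalizing j with
  | zero => simp [one_apply, eq_comm]
  | succ k ih => simp [pow_succ, mul_Jmat_apply, ih, sub_eq_iff_eq_add, add_assoc]

lemma sum_smul_kronecker_Jmat_pow_eq_circulant {p q : ℕ} [NeZero p] [NeZero q]
    (α : ZMod p × ZMod q → ℂ) :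
    ∑ ij : ZMod p × ZMod q, α ij • ((Jmat p ^ ij.1.val) ⊗ₖ (Jmat q ^ ij.2.val)) =
      circulant fun c => α (-c) := by
  ext x y
  have hkron : ∀ ij : ZMod p × ZMod q,
      ((Jmat p ^ ij.1.val) ⊗ₖ (Jmat q ^ ij.2.val)) x y = if ij = y - x then 1 else 0 := by
    intro ij
    simp only [kroneckerMap_apply, Jmat_pow_apply, ZMod.natCast_zmod_val, Prod.ext_iff,
      eq_sub_iff_add_eq', Prod.fst_add, Prod.snd_add, eq_comm (b := _ + _),
      ite_zero_mul_ite_zero, mul_one]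
  simp only [Matrix.sum_apply, Matrix.smul_apply, hkron, smul_eq_mul, mul_ite, mul_one, mul_zero,
    Finset.sum_ite_eq', Finset.mem_univ, if_true, circulant_apply, neg_sub]

theorem stmt4 (p q : ℕ) [NeZero p] [NeZero q] (ωp ωq : ℂ)
    (hωp : IsPrimitiveRoot ωp p) (hωq : IsPrimitiveRoot ωq q)
    (α : ZMod p × ZMod q → ℂ)
    (B : Matrix (ZMod p × ZMod q) (ZMod p × ZMod q) ℂ)
    (hB : B = ∑ ij : ZMod p × ZMod q,
        α ij • ((Jmat p ^ ij.1.val) ⊗ₖ (Jmat q ^ ij.2.val)))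
    (lam : ZMod p × ZMod q → ℂ)
    (hlam : ∀ kl : ZMod p × ZMod q,
      lam kl = ∑ ij : ZMod p × ZMod q,
        α ij * (star ωp) ^ (ij.1.val * kl.1.val) * (star ωq) ^ (ij.2.val * kl.2.val))
    (Φ : ZMod p × ZMod q → ℝ → ℂ)
    (hΦ : ∀ ab t, Φ ab t = ∑ kl : ZMod p × ZMod q,
        ωp ^ (ab.1.val * kl.1.val) * ωq ^ (ab.2.val * kl.2.val) * Complex.exp (t * lam kl)) :
    ∀ (t : ℝ) (i m : ZMod p) (j n : ZMod q),
      NormedSpace.exp ((t : ℂ) • B) (i, j) (m, n) =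
        (1 / ((p : ℂ) * (q : ℂ))) * Φ (m - i, n - j) t := by
  intro t i m j n
  -- built from `ω⁻¹ = ω̄`, so that the eigenvalues of `B` are exactly `lam`
  set ψ := prodZModChar hωp.inv.pow_eq_one hωq.inv.pow_eq_one
  have hcirc : (t : ℂ) • B = circulant fun c => t * α (-c) := by
    rw [hB, sum_smul_kronecker_Jmat_pow_eq_circulant, ← circulant_smul]
    rfl
  have heig : ∀ k, ∑ c, t * α (-c) * ψ k (-c) = t * lam k := by
    intro k
    rw [hlam, Finset.mul_sum]
    refine Fintype.sum_equiv (Equiv.neg _) _ _ fun c => ?_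
    simp only [Equiv.neg_apply, ψ, prodZModChar_apply, hωp.star_eq_inv, hωq.star_eq_inv,
      pow_val_mul_val hωp.inv.pow_eq_one, pow_val_mul_val hωq.inv.pow_eq_one, mul_comm k.1,
      mul_comm k.2]
    ring
  have hphase : ∀ k, ψ k ((i, j) - (m, n)) =
      ωp ^ ((m - i).val * k.1.val) * ωq ^ ((n - j).val * k.2.val) := by
    intro k
    rw [prodZModChar_apply, inv_pow_val hωp.pow_eq_one, inv_pow_val hωq.pow_eq_one,
      pow_val_mul_val hωp.pow_eq_one, pow_val_mul_val hωq.pow_eq_one]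
    congr 2 <;> exact congrArg ZMod.val (by simp only [Prod.fst_sub, Prod.snd_sub]; ring)
  rw [hcirc, exp_circulant_apply (ψ := ψ) (sum_prodZModChar_eq_ite hωp.inv hωq.inv), hΦ,
    Fintype.card_prod, ZMod.card, ZMod.card, Nat.cast_mul, one_div]
  simp only [heig, hphase]
end
end

section
/- Let p, q be positive integers and α : (ZMod p) × (ZMod q) → ℝ a probability distribution with α(0,0) = 0. Let L̃_* be the linear map on the complex matrices indexed by (ZMod p) × (ZMod q) given by L̃_*(x) = Σ_{(i,j)} α(i,j) (J_p^i ⊗ J_q^j) x (J_p^i ⊗ J_q^j)* − x (the predual of the ρ-adjoint generator), and let Q = Σ_{(i,j)} α(i,j) (J_p^i ⊗ J_q^j) − I. Then for every t ∈ ℝ and all i, i' ∈ ZMod p, j, j' ∈ ZMod q, exp(t·L̃_*)(E_{(i,j),(i',j')}) = Σ_{(m,n)} (exp(tQ))_{(0,0),(-m,-n)} E_{(m+i,n+j),(m+i',n+j')}; equivalently, the restriction of the reverse semigroup to each invariant subspace acts as exp(tQᵀ). -/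
/-!
Conjugation by the Kraus operator `J_p^k ⊗ J_q^l`, the permutation matrix of the translation by
`g = (k, l)` on `G = ZMod p × ZMod q`, sends the matrix unit `E_{x,y}` to `E_{x-g,y-g}`. Hence the
diagonal translates `E_{u+a,u+b}` of `E_{a,b}` span an `L̃_*`-invariant subspace. Parametrising it
by `M ↦ ∑ u, M 0 (-u) • E_{u+a,u+b}`, right multiplication of `M` by a shift matrix becomes
conjugation by that shift, so `L̃_*` corresponds to right multiplication by `Q`. Such an
intertwining relation passes termwise to the exponential series, and `E_{a,b}` is the image of `1`.
-/

open Matrix Kronecker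

noncomputable section

attribute [local instance]
  Matrix.frobeniusNormedAddCommGroup Matrix.frobeniusNormedSpace

/-- The Kraus operator `J_p^i ⊗ J_q^j`. -/
def Kr (p q : ℕ) [NeZero p] [NeZero q] (i : ZMod p) (j : ZMod q) :
    Matrix (ZMod p × ZMod q) (ZMod p × ZMod q) ℂ :=
  (Jmat p ^ i.val) ⊗ₖ (Jmat q ^ j.val)

/-- The predual of the `ρ`-adjoint circulant GKSL generator, as a linear
endomorphism of the matrix space: `L̃_*(x) = Σ α(i,j) K x Kᴴ − x`. -/
def LstarTildeLin (p q : ℕ) [NeZero p] [NeZero q] (α : ZMod p × ZMod q → ℝ) :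
    Matrix (ZMod p × ZMod q) (ZMod p × ZMod q) ℂ →ₗ[ℂ]
      Matrix (ZMod p × ZMod q) (ZMod p × ZMod q) ℂ :=
  (∑ ij : ZMod p × ZMod q,
    (α ij : ℂ) •
      (LinearMap.mulLeft ℂ (Kr p q ij.1 ij.2) ∘ₗ
        LinearMap.mulRight ℂ (Kr p q ij.1 ij.2)ᴴ)) - LinearMap.id

open NormedSpace

theorem exp_apply_eq_of_intertwines {𝕂 E 𝔸 : Type*} [RCLike 𝕂] [NormedAddCommGroup E]
    [NormedSpace 𝕂 E] [CompleteSpace E] [NormedRing 𝔸] [NormedAlgebra 𝕂 𝔸] [CompleteSpace 𝔸]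
    (A : E →L[𝕂] E) (Φ : 𝔸 →L[𝕂] E) (x : 𝔸) (h : ∀ m, A (Φ m) = Φ (m * x)) (m : 𝔸) :
    exp A (Φ m) = Φ (m * exp x) := by
  have hpow : ∀ n, (A ^ n) (Φ m) = Φ (m * x ^ n) := by
    intro n
    induction n with
    | zero => simp
    | succ n ih => rw [pow_succ', mul_apply_eq_comp, ih, h, pow_succ, mul_assoc]
  have hA := (exp_series_hasSum_exp' (𝕂 := 𝕂) A).mapL (ContinuousLinearMap.apply 𝕂 E (Φ m))
  have hx := (exp_series_hasSum_exp' (𝕂 := 𝕂) x).mapL (Φ ∘L ContinuousLinearMap.mul 𝕂 𝔸 m)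
  refine hA.unique (hx.congr_fun fun n => ?_)
  simp [hpow]

theorem Matrix.exp_apply_eq_of_intertwines {𝕂 E n : Type*} [RCLike 𝕂] [NormedAddCommGroup E]
    [NormedSpace 𝕂 E] [CompleteSpace E] [Fintype n] [DecidableEq n]
    (A : E →L[𝕂] E) (Φ : Matrix n n 𝕂 →L[𝕂] E) (x : Matrix n n 𝕂)
    (h : ∀ m, A (Φ m) = Φ (m * x)) (m : Matrix n n 𝕂) :
    exp A (Φ m) = Φ (m * exp x) :=
  letI : NormedRing (Matrix n n 𝕂) := Matrix.frobeniusNormedRing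
  letI : NormedAlgebra 𝕂 (Matrix n n 𝕂) := Matrix.frobeniusNormedAlgebra
  _root_.exp_apply_eq_of_intertwines A Φ x h m

theorem permMatrix_mul_single_mul_conjTranspose {n R : Type*} [DecidableEq n] [Fintype n]
    [NonAssocSemiring R] [StarRing R] (σ : Equiv.Perm n) (a b : n) (r : R) :
    σ.permMatrix R * single a b r * (σ.permMatrix R)ᴴ = single (σ.symm a) (σ.symm b) r := by
  rw [conjTranspose_permMatrix, PEquiv.toMatrix_toPEquiv_mul, PEquiv.mul_toMatrix_toPEquiv]
  simp

section Circulant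

variable {G R : Type*} [AddCommGroup G] [Fintype G] [DecidableEq G]

def orbitSum [CommSemiring R] (a b : G) : Matrix G G R →ₗ[R] Matrix G G R :=
  ∑ u : G, (entryLinearMap R R 0 (-u)).smulRight (single (u + a) (u + b) 1)

theorem orbitSum_apply [CommSemiring R] (a b : G) (M : Matrix G G R) :
    orbitSum a b M = ∑ u : G, M 0 (-u) • single (u + a) (u + b) 1 := by
  simp [orbitSum]

theorem orbitSum_one [CommSemiring R] (a b : G) :
    orbitSum a b (1 : Matrix G G R) = single a b 1 := by
  rw [orbitSum_apply, Finset.sum_eq_single 0] <;> simp +contextual [one_apply, eq_comm]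

theorem orbitSum_mul_permMatrix [CommSemiring R] [StarRing R] (a b g : G) (M : Matrix G G R) :
    orbitSum a b (M * (Equiv.addRight g).permMatrix R) =
      (Equiv.addRight g).permMatrix R * orbitSum a b M * ((Equiv.addRight g).permMatrix R)ᴴ := by
  simp only [orbitSum_apply, Matrix.mul_sum, Matrix.sum_mul, Matrix.mul_smul, Matrix.smul_mul,
    permMatrix_mul_single_mul_conjTranspose, PEquiv.mul_toMatrix_toPEquiv]
  refine Fintype.sum_equiv (Equiv.addRight g) _ _ fun u => ?_
  simp only [submatrix_apply, id, Equiv.addRight_symm, Equiv.coe_addRight, smul_single,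
    smul_eq_mul, mul_one]
  congr 1 <;> abel_nf

def circulantGenerator [CommRing R] [StarRing R] (β : G → R) :
    Matrix G G R →ₗ[R] Matrix G G R :=
  (∑ g : G, β g • (LinearMap.mulLeft R ((Equiv.addRight g).permMatrix R) ∘ₗ
    LinearMap.mulRight R ((Equiv.addRight g).permMatrix R)ᴴ)) - LinearMap.id

theorem circulantGenerator_orbitSum [CommRing R] [StarRing R] (β : G → R) (a b : G)
    (M : Matrix G G R) :
    circulantGenerator β (orbitSum a b M) =
      orbitSum a b (M * ((∑ g : G, β g • (Equiv.addRight g).permMatrix R) - 1)) := by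
  rw [Matrix.mul_sub, Matrix.mul_one, Finset.mul_sum, map_sub, map_sum]
  simp [circulantGenerator, orbitSum_mul_permMatrix, Matrix.mul_assoc]

end Circulant

theorem Jmat_pow_eq_permMatrix (p : ℕ) [NeZero p] (k : ℕ) :
    Jmat p ^ k = (Equiv.addRight (k : ZMod p)).permMatrix ℂ := by
  induction k with
  | zero => simp
  | succ k ih =>
    have hJ : Jmat p = (Equiv.addRight (1 : ZMod p)).permMatrix ℂ := by
      ext a c
      simp [Jmat, PEquiv.toMatrix_apply, eq_comm]
    rw [pow_succ, ih, hJ, ← permMatrix_mul]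
    congr 1
    ext x
    simp [add_assoc]

theorem Kr_eq_permMatrix (p q : ℕ) [NeZero p] [NeZero q] (k : ZMod p) (l : ZMod q) :
    Kr p q k l = (Equiv.addRight (k, l)).permMatrix ℂ := by
  ext ⟨a, b⟩ ⟨c, d⟩
  simp only [Kr, Jmat_pow_eq_permMatrix, ZMod.natCast_val, ZMod.cast_id, kroneckerMap_apply,
    PEquiv.toMatrix_apply, Equiv.toPEquiv_apply, Option.mem_def, Option.some.injEq,
    Equiv.coe_addRight, Prod.mk_add_mk, Prod.mk.injEq, ite_zero_mul_ite_zero, mul_one]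

theorem LstarTildeLin_eq (p q : ℕ) [NeZero p] [NeZero q] (α : ZMod p × ZMod q → ℝ) :
    LstarTildeLin p q α = circulantGenerator (fun g ↦ (α g : ℂ)) := by
  simp only [LstarTildeLin, circulantGenerator, Kr_eq_permMatrix]

theorem LstarTildeLin_orbitSum (p q : ℕ) [NeZero p] [NeZero q] (α : ZMod p × ZMod q → ℝ)
    (a b : ZMod p × ZMod q) (M : Matrix (ZMod p × ZMod q) (ZMod p × ZMod q) ℂ) :
    LstarTildeLin p q α (orbitSum a b M) =
      orbitSum a b (M * ((∑ ij : ZMod p × ZMod q, (α ij : ℂ) • Kr p q ij.1 ij.2) - 1)) := by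
  simpa only [LstarTildeLin_eq, Kr_eq_permMatrix] using
    circulantGenerator_orbitSum (fun g ↦ (α g : ℂ)) a b M

theorem stmt13_general (p q : ℕ) [NeZero p] [NeZero q]
    (α : ZMod p × ZMod q → ℝ)
    (Q : Matrix (ZMod p × ZMod q) (ZMod p × ZMod q) ℂ)
    (hQ : Q = (∑ ij : ZMod p × ZMod q, (α ij : ℂ) • Kr p q ij.1 ij.2) - 1) :
    ∀ (t : ℝ) (i i' : ZMod p) (j j' : ZMod q),
      @NormedSpace.exp _ _ _ (@NonUnitalSeminormedRing.toIsTopologicalRing _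
          (ContinuousLinearMap.toSeminormedRing (𝕜 := ℂ)
            (E := Matrix (ZMod p × ZMod q) (ZMod p × ZMod q) ℂ)).toNonUnitalSeminormedRing)
          ((t : ℂ) • (LinearMap.toContinuousLinearMap (LstarTildeLin p q α)))
          (Matrix.single (i, j) (i', j') (1 : ℂ)) =
        ∑ mn : ZMod p × ZMod q,
          NormedSpace.exp ((t : ℂ) • Q) (0, 0) (-mn.1, -mn.2) •
            Matrix.single (mn.1 + i, mn.2 + j) (mn.1 + i', mn.2 + j') (1 : ℂ) := by
  intro t i i' j j'
  have key := Matrix.exp_apply_eq_of_intertwines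
    (E := Matrix (ZMod p × ZMod q) (ZMod p × ZMod q) ℂ)
    ((t : ℂ) • LinearMap.toContinuousLinearMap (LstarTildeLin p q α))
    (LinearMap.toContinuousLinearMap (orbitSum (i, j) (i', j'))) ((t : ℂ) • Q)
    (fun M ↦ by
      -- the two sides carry different (defeq) topologies on the matrix space, which blocks `rw`
      change (t : ℂ) • LstarTildeLin p q α (orbitSum _ _ M) = orbitSum _ _ (M * ((t : ℂ) • Q))
      rw [LstarTildeLin_orbitSum, ← hQ, mul_smul_comm, map_smul]) 1
  rw [LinearMap.coe_toContinuousLinearMap', orbitSum_one, one_mul, orbitSum_apply] at key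
  -- `0`, `-u` and `u + (i, j)` in the product group unfold to the componentwise pairs of the goal
  exact key

theorem stmt13 (p q : ℕ) [NeZero p] [NeZero q]
    (α : ZMod p × ZMod q → ℝ) (hα : ∀ ij, 0 ≤ α ij)
    (hsum : ∑ ij : ZMod p × ZMod q, α ij = 1) (h0 : α (0, 0) = 0)
    (Q : Matrix (ZMod p × ZMod q) (ZMod p × ZMod q) ℂ)
    (hQ : Q = (∑ ij : ZMod p × ZMod q, (α ij : ℂ) • Kr p q ij.1 ij.2) - 1) :
    ∀ (t : ℝ) (i i' : ZMod p) (j j' : ZMod q),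
      @NormedSpace.exp _ _ _ (@NonUnitalSeminormedRing.toIsTopologicalRing _
          (ContinuousLinearMap.toSeminormedRing (𝕜 := ℂ)
            (E := Matrix (ZMod p × ZMod q) (ZMod p × ZMod q) ℂ)).toNonUnitalSeminormedRing)
          ((t : ℂ) • (LinearMap.toContinuousLinearMap (LstarTildeLin p q α)))
          (Matrix.single (i, j) (i', j') (1 : ℂ)) =
        ∑ mn : ZMod p × ZMod q,
          NormedSpace.exp ((t : ℂ) • Q) (0, 0) (-mn.1, -mn.2) •
            Matrix.single (mn.1 + i, mn.2 + j) (mn.1 + i', mn.2 + j') (1 : ℂ) :=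
  stmt13_general p q α Q hQ
end
end

section
/- Let p, q be positive integers and α : (ZMod p) × (ZMod q) → ℝ with α(0,0) = 0, α(m,n) > 0 for all (m,n) ≠ (0,0), and Σ_{(m,n)} α(m,n) = 1. Let Q = Σ_{(i,j)} α(i,j)(J_p^i ⊗ J_q^j) − I, a real matrix indexed by (ZMod p) × (ZMod q). Then the Quantum Entropy Production Rate of the associated circulant quantum Markov semigroup with respect to the invariant state ρ = (1/(pq))·I, namely the limit lim_{t → 0⁺} (1/t) · Σ_{(m,n)} (exp(tQ))_{(0,0),(m,n)} · log( (exp(tQ))_{(0,0),(m,n)} / (exp(tQ))_{(0,0),(-m,-n)} ), exists and equals (1/2) Σ_{(m,n) ≠ (0,0)} (α(m,n) − α(-m,-n)) · log( α(m,n) / α(-m,-n) ). -/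
/-!
For `x ≠ 0` the entry `exp(tQ)₍₀,ₓ₎` vanishes at `t = 0` with derivative `Q₍₀,ₓ₎ = α x`. Since the
ratio inside the logarithm is unchanged when both entries are divided by `t`, each off-diagonal
term of `(1/t) S(Ω_t, Ω̃_t)` tends to `α x log (α x / α (-x))`, while the diagonal term
`e log (e / e)` vanishes identically. Pairing `x` with `-x` turns the limit into the symmetric form.
-/

open Matrix Kronecker

noncomputable section

/-- The primary permutation (left-shift) matrix `J_p` over `ℝ`. -/
def JmatR (p : ℕ) : Matrix (ZMod p) (ZMod p) ℝ :=
  Matrix.of fun i j => if j = i + 1 then 1 else 0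

/-- The real Kraus operator `J_p^i ⊗ J_q^j`. -/
def KrR (p q : ℕ) [NeZero p] [NeZero q] (i : ZMod p) (j : ZMod q) :
    Matrix (ZMod p × ZMod q) (ZMod p × ZMod q) ℝ :=
  (JmatR p ^ i.val) ⊗ₖ (JmatR q ^ j.val)

open Filter Topology Finset

lemma JmatR_pow_apply (p : ℕ) [NeZero p] (k : ℕ) (a b : ZMod p) :
    (JmatR p ^ k) a b = if b = a + k then 1 else 0 := by
  induction k generalizing b with
  | zero => simp [one_apply, eq_comm]
  | succ k ih =>
    rw [pow_succ, mul_apply]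
    simp only [ih, ite_mul, one_mul, zero_mul, sum_ite_eq', mem_univ, if_true]
    simp [JmatR, add_assoc]

lemma KrR_apply (p q : ℕ) [NeZero p] [NeZero q] (i : ZMod p) (j : ZMod q)
    (a b : ZMod p × ZMod q) :
    KrR p q i j a b = if b = a + (i, j) then 1 else 0 := by
  simp [KrR, JmatR_pow_apply, Prod.ext_iff, ← ite_and, and_comm]

lemma sum_smul_KrR_apply (p q : ℕ) [NeZero p] [NeZero q] (α : ZMod p × ZMod q → ℝ)
    (a b : ZMod p × ZMod q) :
    (∑ ij : ZMod p × ZMod q, α ij • KrR p q ij.1 ij.2) a b = α (b - a) := by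
  simp [Matrix.sum_apply, KrR_apply, ← sub_eq_iff_eq_add']

lemma hasDerivAt_exp_smul_apply {𝕂 n : Type*} [RCLike 𝕂] [Fintype n] [DecidableEq n]
    (Q : Matrix n n 𝕂) (i j : n) :
    HasDerivAt (fun t : 𝕂 => NormedSpace.exp (t • Q) i j) (Q i j) 0 := by
  open scoped Norms.Operator in
  have hexp := hasDerivAt_exp_smul_const' (𝕂 := 𝕂) Q 0
  rw [zero_smul, NormedSpace.exp_zero, mul_one] at hexp
  exact (entryLinearMap 𝕂 𝕂 i j).toContinuousLinearMap.hasFDerivAt.comp_hasDerivAt 0 hexp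

lemma tendsto_exp_smul_apply_div_self {𝕂 n : Type*} [RCLike 𝕂] [Fintype n] [DecidableEq n]
    (Q : Matrix n n 𝕂) {i j : n} (hij : i ≠ j) :
    Tendsto (fun t : 𝕂 => NormedSpace.exp (t • Q) i j / t) (𝓝[≠] 0) (𝓝 (Q i j)) := by
  simpa [NormedSpace.exp_zero, one_apply_ne hij, div_eq_inv_mul] using
    (hasDerivAt_exp_smul_apply Q i j).tendsto_slope_zero

def relEntropy {ι : Type*} [Fintype ι] (u v : ι → ℝ) : ℝ :=
  ∑ i, u i * Real.log (u i / v i)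

lemma one_div_two_mul_sum_sub_mul_log_div_neg {G : Type*} [AddGroup G] (s : Finset G)
    (hs : ∀ x ∈ s, -x ∈ s) (f : G → ℝ) :
    (1 / 2) * ∑ x ∈ s, (f x - f (-x)) * Real.log (f x / f (-x)) =
      ∑ x ∈ s, f x * Real.log (f x / f (-x)) := by
  have hswap : ∑ x ∈ s, f (-x) * Real.log (f x / f (-x)) =
      -∑ x ∈ s, f x * Real.log (f x / f (-x)) := by
    rw [← sum_neg_distrib]
    refine sum_nbij' (-·) (-·) hs hs (by simp) (by simp) fun x _ => ?_
    rw [neg_neg, ← inv_div, Real.log_inv]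
    ring
  simp_rw [sub_mul]
  rw [sum_sub_distrib, hswap]
  ring

theorem tendsto_one_div_mul_relEntropy_exp_smul_row_neg {G : Type*} [AddGroup G] [Fintype G]
    [DecidableEq G] (Q : Matrix G G ℝ) (hQ : ∀ x ≠ 0, Q 0 x ≠ 0) :
    Tendsto (fun t : ℝ => (1 / t) * relEntropy (NormedSpace.exp (t • Q) 0)
        (fun x => NormedSpace.exp (t • Q) 0 (-x)))
      (𝓝[≠] 0)
      (𝓝 ((1 / 2) * ∑ x ∈ univ.erase 0, (Q 0 x - Q 0 (-x)) * Real.log (Q 0 x / Q 0 (-x)))) := by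
  rw [one_div_two_mul_sum_sub_mul_log_div_neg _ (by simp) (Q 0)]
  have hslope (x : G) (hx : x ≠ 0) :
      Tendsto (fun t : ℝ => NormedSpace.exp (t • Q) 0 x / t) (𝓝[≠] 0) (𝓝 (Q 0 x)) :=
    tendsto_exp_smul_apply_div_self Q hx.symm
  have hterm : ∀ x ∈ univ.erase 0, Tendsto
      (fun t : ℝ => NormedSpace.exp (t • Q) 0 x / t *
        Real.log ((NormedSpace.exp (t • Q) 0 x / t) / (NormedSpace.exp (t • Q) 0 (-x) / t)))
      (𝓝[≠] 0) (𝓝 (Q 0 x * Real.log (Q 0 x / Q 0 (-x)))) := by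
    intro x hx
    have hx0 : x ≠ 0 := ne_of_mem_erase hx
    have hnx0 : -x ≠ 0 := neg_ne_zero.mpr hx0
    have hratio := (hslope x hx0).div (hslope (-x) hnx0) (hQ _ hnx0)
    exact (hslope x hx0).mul
      ((Real.continuousAt_log (div_ne_zero (hQ x hx0) (hQ _ hnx0))).tendsto.comp hratio)
  refine (tendsto_finsetSum _ hterm).congr' ?_
  filter_upwards [self_mem_nhdsWithin] with t (ht : t ≠ 0)
  rw [relEntropy, ← add_sum_erase _ _ (mem_univ 0), neg_zero, Real.log_div_self, mul_zero,
    zero_add, mul_sum]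
  refine sum_congr rfl fun x _ => ?_
  rw [div_div_div_cancel_right₀ ht]
  ring

theorem stmt15_general (p q : ℕ) [NeZero p] [NeZero q]
    (α : ZMod p × ZMod q → ℝ)
    (hpos : ∀ mn : ZMod p × ZMod q, mn ≠ (0, 0) → 0 < α mn)
    (Q : Matrix (ZMod p × ZMod q) (ZMod p × ZMod q) ℝ)
    (hQ : Q = (∑ ij : ZMod p × ZMod q, α ij • KrR p q ij.1 ij.2) - 1) :
    Filter.Tendsto
      (fun t : ℝ => (1 / t) *
        ∑ mn : ZMod p × ZMod q,
          NormedSpace.exp (t • Q) (0, 0) mn *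
            Real.log (NormedSpace.exp (t • Q) (0, 0) mn /
              NormedSpace.exp (t • Q) (0, 0) (-mn.1, -mn.2)))
      (nhdsWithin 0 (Set.Ioi 0))
      (nhds ((1 / 2) *
        ∑ mn ∈ Finset.univ.erase ((0 : ZMod p), (0 : ZMod q)),
          (α mn - α (-mn.1, -mn.2)) * Real.log (α mn / α (-mn.1, -mn.2)))) := by
  have hrow (x : ZMod p × ZMod q) (hx : x ≠ 0) : Q 0 x = α x := by
    rw [hQ, Matrix.sub_apply, sum_smul_KrR_apply, sub_zero, one_apply_ne' hx, sub_zero]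
  have hrate := (tendsto_one_div_mul_relEntropy_exp_smul_row_neg Q
    fun x hx => hrow x hx ▸ (hpos x hx).ne').mono_left (nhdsGT_le_nhdsNE 0)
  -- `(0, 0)` and `(-mn.1, -mn.2)` are `0` and `-mn` up to unfolding the product instances
  rwa [sum_congr rfl fun x hx => by
    rw [hrow x (ne_of_mem_erase hx), hrow (-x) (neg_ne_zero.mpr (ne_of_mem_erase hx))]] at hrate

/-- The Quantum Entropy Production Rate of the circulant qms with respect to the
invariant state `(1/(pq))·I` is the right derivative at `t = 0` of the relative
entropy `S(Ω_t, Ω̃_t)`, whose value is the displayed sum of the eigenvalues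
`(exp(tQ))_{(0,0),(m,n)}` of the forward and backward states. -/
theorem stmt15 (p q : ℕ) [NeZero p] [NeZero q]
    (α : ZMod p × ZMod q → ℝ) (h0 : α (0, 0) = 0)
    (hpos : ∀ mn : ZMod p × ZMod q, mn ≠ (0, 0) → 0 < α mn)
    (hsum : ∑ mn : ZMod p × ZMod q, α mn = 1)
    (Q : Matrix (ZMod p × ZMod q) (ZMod p × ZMod q) ℝ)
    (hQ : Q = (∑ ij : ZMod p × ZMod q, α ij • KrR p q ij.1 ij.2) - 1) :
    Filter.Tendsto
      (fun t : ℝ => (1 / t) *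
        ∑ mn : ZMod p × ZMod q,
          NormedSpace.exp (t • Q) (0, 0) mn *
            Real.log (NormedSpace.exp (t • Q) (0, 0) mn /
              NormedSpace.exp (t • Q) (0, 0) (-mn.1, -mn.2)))
      (nhdsWithin 0 (Set.Ioi 0))
      (nhds ((1 / 2) *
        ∑ mn ∈ Finset.univ.erase ((0 : ZMod p), (0 : ZMod q)),
          (α mn - α (-mn.1, -mn.2)) * Real.log (α mn / α (-mn.1, -mn.2)))) :=
  stmt15_general p q α hpos Q hQ
end
end
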